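/- Let α > 0. For every x ∈ [0,1], the value χ_α(−x) is real; the map x ↦ χ_α(−x) is strictly increasing on [0,1]; and χ_α(−1) = α. -/

import Mathlib

/-!
With `t = 1 - x`, the radicand `4α² + t²` is a positive real and the logarithm equals
`-arsinh (t / 2α)`, so `χ_α(-x) = α φ(t / 2α)` with `φ y = √(1 + y²) - y arsinh y`.
Since `φ' = -arsinh < 0` on `(0, ∞)`, `φ` decreases there, and `φ 0 = 1` gives `χ_α(-1) = α`.
-/

open Complex

/-- The principal branch of the complex square root. -/
noncomputable def csqrt (z : ℂ) : ℂ := z ^ (1 / 2 : ℂ)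

/-- `χ_α(z) := (1/2)·√(4α²+(1+z)²) + ((1+z)/2)·log(2α/(1+z+√(4α²+(1+z)²)))`,
with principal branches of square root and logarithm. -/
noncomputable def chi (α : ℝ) (z : ℂ) : ℂ :=
  (1 / 2 : ℂ) * csqrt (4 * (α : ℂ) ^ 2 + (1 + z) ^ 2) +
    (1 + z) / 2 * Complex.log (2 * (α : ℂ) / (1 + z + csqrt (4 * (α : ℂ) ^ 2 + (1 + z) ^ 2)))

open Real

lemma csqrt_ofReal {r : ℝ} (hr : 0 ≤ r) : csqrt r = (√r : ℝ) := by
  rw [csqrt, sqrt_eq_rpow, ofReal_cpow hr]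
  norm_num

lemma sqrt_one_add_div_sq {a : ℝ} (ha : 0 < a) (t : ℝ) :
    √(1 + (t / a) ^ 2) = √(a ^ 2 + t ^ 2) / a := by
  rw [show 1 + (t / a) ^ 2 = (a ^ 2 + t ^ 2) / a ^ 2 by field_simp,
    sqrt_div' _ (sq_nonneg a), sqrt_sq ha.le]

lemma add_sqrt_sq_add_sq_pos {a : ℝ} (ha : 0 < a) (t : ℝ) : 0 < t + √(a ^ 2 + t ^ 2) := by
  have : |t| < √(a ^ 2 + t ^ 2) := by
    rw [← sqrt_sq_eq_abs]
    exact sqrt_lt_sqrt (sq_nonneg t) (by nlinarith)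
  linarith [neg_abs_le t]

lemma log_div_add_sqrt_sq_add_sq {a : ℝ} (ha : 0 < a) (t : ℝ) :
    Real.log (a / (t + √(a ^ 2 + t ^ 2))) = -arsinh (t / a) := by
  rw [arsinh, sqrt_one_add_div_sq ha, ← Real.log_inv, ← add_div, inv_div]

/-- `-cosh^*`, the negated Legendre transform of `cosh`. -/
noncomputable def negCoshConj (y : ℝ) : ℝ := √(1 + y ^ 2) - y * arsinh y

lemma hasDerivAt_negCoshConj (y : ℝ) : HasDerivAt negCoshConj (-arsinh y) y := by
  have hsq : HasDerivAt (fun y => 1 + y ^ 2) (2 * y) y := by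
    simpa using (hasDerivAt_pow 2 y).const_add 1
  refine ((hsq.sqrt (by positivity)).sub
    ((hasDerivAt_id' y).mul (hasDerivAt_arsinh y))).congr_deriv ?_
  field_simp
  ring

lemma strictAntiOn_negCoshConj : StrictAntiOn negCoshConj (Set.Ici 0) := by
  refine strictAntiOn_of_deriv_neg (convex_Ici 0)
    (fun y _ => (hasDerivAt_negCoshConj y).continuousAt.continuousWithinAt) fun y hy => ?_
  rw [interior_Ici] at hy
  rw [(hasDerivAt_negCoshConj y).deriv, neg_lt_zero]
  exact arsinh_pos_iff.2 hy

lemma negCoshConj_zero : negCoshConj 0 = 1 := by simp [negCoshConj]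

lemma chi_neg_ofReal {α : ℝ} (hα : 0 < α) (x : ℝ) :
    chi α (-x) = (α * negCoshConj ((1 - x) / (2 * α)) : ℝ) := by
  have h2α : 0 < 2 * α := by positivity
  have hα' : (α : ℂ) ≠ 0 := ofReal_ne_zero.2 hα.ne'
  have hsq : csqrt (4 * (α : ℂ) ^ 2 + (1 + -(x : ℂ)) ^ 2) =
      (√((2 * α) ^ 2 + (1 - x) ^ 2) : ℝ) := by
    rw [← csqrt_ofReal (by positivity)]
    push_cast
    ring_nf
  have hquot : 2 * (α : ℂ) / (1 + -(x : ℂ) + (√((2 * α) ^ 2 + (1 - x) ^ 2) : ℝ)) =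
      ((2 * α / ((1 - x) + √((2 * α) ^ 2 + (1 - x) ^ 2)) : ℝ) : ℂ) := by
    push_cast
    ring
  have hpos := add_sqrt_sq_add_sq_pos h2α (1 - x)
  rw [chi, hsq, hquot, ← ofReal_log (by positivity), log_div_add_sqrt_sq_add_sq h2α,
    negCoshConj, sqrt_one_add_div_sq h2α]
  push_cast
  field_simp
  ring

theorem chi_real_on_segment (α : ℝ) (hα : 0 < α) :
    (∀ x ∈ Set.Icc (0 : ℝ) 1, (chi α (-(x : ℂ))).im = 0) ∧
    StrictMonoOn (fun x : ℝ => (chi α (-(x : ℂ))).re) (Set.Icc (0 : ℝ) 1) ∧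
    chi α (-1) = (α : ℂ) := by
  have hmono : StrictMonoOn (fun x : ℝ => α * negCoshConj ((1 - x) / (2 * α)))
      (Set.Icc 0 1) := by
    intro a ha b hb hab
    have h2α : 0 < 2 * α := by positivity
    refine mul_lt_mul_of_pos_left (strictAntiOn_negCoshConj ?_ ?_ ?_) hα
    · exact div_nonneg (by linarith [hb.2]) h2α.le
    · exact div_nonneg (by linarith [ha.2]) h2α.le
    · exact div_lt_div_of_pos_right (by linarith) h2α
  refine ⟨fun x _ => by rw [chi_neg_ofReal hα]; exact ofReal_im _, fun a ha b hb hab => ?_, ?_⟩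
  · simpa only [chi_neg_ofReal hα, ofReal_re] using hmono ha hb hab
  · simpa [negCoshConj_zero] using chi_neg_ofReal hα 1
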